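/- arXiv:2011.14248 — 5 statements merged into one kernel-verified Lean document; each statement's English description precedes it below -/
import Mathlib

section
/- Let p be a prime, and let a, b be positive integers with a < p, b < p, and p ≤ a + b. Then in the field F_p, b · C(b-1, p-a-1) = (-1)^(a+1) · (a! · b!) / (a+b-p)!, where C denotes the binomial coefficient and the factorials a!, b!, (a+b-p)! are taken as natural numbers reduced mod p. -/
/-!
Write `k = p - a - 1` and `m = a + b - p`, so that `k + m = b - 1` and both factorials are
units mod `p`. Then `b · C(b-1, k) = b! / (k! m!)`, and splitting Wilson's theorem
`(p-1)! = -1` as `(p-1)! = k! · (p-1)(p-2)⋯(p-a) ≡ k! · (-1)^a a!` gives `1 / k! = (-1)^(a+1) a!`.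
-/

open Nat

namespace ZMod

variable {p : ℕ} [Fact p.Prime]

theorem natCast_factorial_ne_zero {n : ℕ} (hn : n < p) : (n ! : ZMod p) ≠ 0 := by
  rw [Ne, natCast_eq_zero_iff, (Fact.out : p.Prime).dvd_factorial]
  omega

theorem inv_factorial_eq_neg_one_pow_mul_factorial {k a : ℕ} (h : k + a + 1 = p) :
    (k ! : ZMod p)⁻¹ = (-1) ^ (a + 1) * a ! := by
  have hsplit : k ! * (p - 1).descFactorial a = (p - 1)! := by
    rw [← factorial_mul_descFactorial (show a ≤ p - 1 by omega), show p - 1 - a = k by omega]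
  have hwilson : (k ! : ZMod p) * ((-1) ^ a * a !) = -1 := by
    rw [← cast_descFactorial (by omega), ← wilsons_lemma, ← hsplit, Nat.cast_mul]
  refine inv_eq_of_mul_eq_one_right ?_
  linear_combination (-1 : ZMod p) * hwilson

end ZMod

theorem binomial_lemma_general (p a b : ℕ) [Fact p.Prime]
    (ha : a < p) (hb : b < p) (hab : p ≤ a + b) :
    (b : ZMod p) * (Nat.choose (b - 1) (p - a - 1) : ZMod p) =
      (-1) ^ (a + 1) * ((a.factorial : ZMod p) * (b.factorial : ZMod p)) /
        ((a + b - p).factorial : ZMod p) := by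
  set k := p - a - 1
  set m := a + b - p
  have hchoose : ((b - 1).choose k : ZMod p) * k ! * m ! = (b - 1)! := by
    have := choose_mul_factorial_mul_factorial (show k ≤ b - 1 by omega)
    rw [show b - 1 - k = m by omega] at this
    exact_mod_cast congrArg (Nat.cast : ℕ → ZMod p) this
  have hsucc : (b : ZMod p) * (b - 1)! = b ! := by
    exact_mod_cast congrArg (Nat.cast : ℕ → ZMod p) (mul_factorial_pred (show b ≠ 0 by omega))
  have hinv : (k ! : ZMod p)⁻¹ = (-1) ^ (a + 1) * a ! :=
    ZMod.inv_factorial_eq_neg_one_pow_mul_factorial (by omega)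
  rw [eq_div_iff (ZMod.natCast_factorial_ne_zero (by omega))]
  calc (b : ZMod p) * (b - 1).choose k * m !
      = b * (b - 1).choose k * m ! * k ! * (k ! : ZMod p)⁻¹ :=
        (mul_inv_cancel_right₀ (ZMod.natCast_factorial_ne_zero (by omega)) _).symm
    _ = b * (b - 1)! * (k ! : ZMod p)⁻¹ := by rw [← hchoose]; ring
    _ = (-1) ^ (a + 1) * (a ! * b !) := by rw [hsucc, hinv]; ring

theorem binomial_lemma (p a b : ℕ) [Fact p.Prime] (hodd : p ≠ 2)
    (ha0 : 0 < a) (hb0 : 0 < b) (ha : a < p) (hb : b < p) (hab : p ≤ a + b) :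
    (b : ZMod p) * (Nat.choose (b - 1) (p - a - 1) : ZMod p) =
      (-1) ^ (a + 1) * ((a.factorial : ZMod p) * (b.factorial : ZMod p)) /
        ((a + b - p).factorial : ZMod p) :=
  binomial_lemma_general p a b ha hb hab
end

section
/- Let p be an odd prime, and a, b nonnegative integers with a < p, b < p, and p - 1 ≤ a + b. Then the coefficient of x^(p-1) in the polynomial x^a (1-x)^b over F_p equals -(a! · b!)/(a+b-p+1)!, where factorials are reduced mod p. -/
/-!
The coefficient of `x^(p-1)` in `x^a (1-x)^b` is `(-1)^k * choose b k` with `k = p - 1 - a`.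
Splitting `(p-1)! = k! * (p-1)⋯(p-k)` and reducing the descending product mod `p` gives
`(-1)^k * k! * a! = (p-1)! = -1` (Wilson), which turns `choose b k = b! / (k! (b-k)!)` into
the claimed `-a! b! / (a+b+1-p)!`.
-/

open Polynomial Nat

theorem Polynomial.coeff_one_sub_X_pow {R : Type*} [CommRing R] (n k : ℕ) :
    ((1 - X : R[X]) ^ n).coeff k = (-1) ^ k * (n.choose k : R) := by
  have h : (1 - X : R[X]) ^ n = ((1 + X) ^ n).comp (C (-1) * X) := by
    simp [sub_eq_add_neg]
  rw [h, comp_C_mul_X_coeff, coeff_one_add_X_pow, mul_comm]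

theorem ZMod.neg_one_pow_mul_factorial_mul_factorial {p k a : ℕ} [Fact p.Prime]
    (h : k + a = p - 1) :
    (-1) ^ k * (k ! : ZMod p) * (a ! : ZMod p) = -1 := by
  have hsplit := Nat.factorial_mul_descFactorial (show k ≤ p - 1 by omega)
  rw [show p - 1 - k = a by omega] at hsplit
  calc (-1) ^ k * (k ! : ZMod p) * (a ! : ZMod p)
        = ((a ! * (p - 1).descFactorial k : ℕ) : ZMod p) := by
        rw [Nat.cast_mul, ZMod.cast_descFactorial (by omega : k ≤ p)]
        ring
    _ = -1 := by rw [hsplit, ZMod.wilsons_lemma]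

theorem Fp_beta_integral_general (p a b : ℕ) [Fact p.Prime]
    (ha : a < p) (hb : b < p) (hab : p - 1 ≤ a + b) :
    (Polynomial.X ^ a * (1 - Polynomial.X) ^ b : Polynomial (ZMod p)).coeff (p - 1) =
      -(((a.factorial : ZMod p) * (b.factorial : ZMod p)) /
        ((a + b + 1 - p).factorial : ZMod p)) := by
  set k := p - 1 - a
  have hk : k + a = p - 1 := by omega
  have hkb : k ≤ b := by omega
  have hcoeff : (X ^ a * (1 - X) ^ b : (ZMod p)[X]).coeff (p - 1) =
      (-1) ^ k * (b.choose k : ZMod p) := by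
    rw [← hk, coeff_X_pow_mul, coeff_one_sub_X_pow]
  have hchoose : (b ! : ZMod p) = (b.choose k : ZMod p) * k ! * (a + b + 1 - p)! := by
    rw [show a + b + 1 - p = b - k by omega, ← Nat.cast_mul, ← Nat.cast_mul,
      Nat.choose_mul_factorial_mul_factorial hkb]
  have hfact_ne : ((a + b + 1 - p)! : ZMod p) ≠ 0 := by
    rw [Ne, ZMod.natCast_eq_zero_iff, Nat.Prime.dvd_factorial Fact.out]
    omega
  have hwilson := ZMod.neg_one_pow_mul_factorial_mul_factorial hk
  have hsign : ((-1) ^ k : ZMod p) * (-1) ^ k = 1 := by rw [← mul_pow]; simp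
  rw [hcoeff, hchoose, eq_neg_iff_add_eq_zero, mul_div_assoc, mul_div_cancel_right₀ _ hfact_ne]
  linear_combination (b.choose k : ZMod p) * ((-1) ^ k * hwilson - k ! * a ! * hsign)

theorem Fp_beta_integral (p a b : ℕ) [Fact p.Prime] (hodd : p ≠ 2)
    (ha : a < p) (hb : b < p) (hab : p - 1 ≤ a + b) :
    (Polynomial.X ^ a * (1 - Polynomial.X) ^ b : Polynomial (ZMod p)).coeff (p - 1) =
      -(((a.factorial : ZMod p) * (b.factorial : ZMod p)) /
        ((a + b + 1 - p).factorial : ZMod p)) :=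
  Fp_beta_integral_general p a b ha hb hab
end

section
/- Let p be an odd prime and a, b, c, n nonnegative integers with n ≥ 1 and a + b + (2n-2)c < 2p - 1. Then S_n(a,b,c) = S_n(b,a,c), where S_n is the F_p-Selberg integral. -/
open MvPolynomial Finset

/-- The Selberg master polynomial `∏_{i<j}(x_i-x_j)^{2c} ∏_i x_i^a (1-x_i)^b` over `F_p`. -/
noncomputable def selbergPoly (p n a b c : ℕ) : MvPolynomial (Fin n) (ZMod p) :=
  (∏ i : Fin n, ∏ j ∈ Finset.univ.filter (fun j => i < j), (X i - X j) ^ (2 * c)) *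
    ∏ i : Fin n, X i ^ a * (1 - X i) ^ b

/-- The `F_p`-Selberg integral `S_n(a,b,c)`: the coefficient of
`x_1^(p-1) ⋯ x_n^(p-1)` in the Selberg master polynomial. -/
noncomputable def selbergInt (p n a b c : ℕ) : ZMod p :=
  MvPolynomial.coeff (Finsupp.equivFunOnFinite.symm fun _ : Fin n => p - 1)
    (selbergPoly p n a b c)

section Aux

variable {σ R ι : Type*} [CommRing R] {p n : ℕ}

private lemma degreeOf_prod_le' (v : σ) (s : Finset ι) (f : ι → MvPolynomial σ R) (b : ι → ℕ)
    (h : ∀ i ∈ s, degreeOf v (f i) ≤ b i) :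
    degreeOf v (∏ i ∈ s, f i) ≤ ∑ i ∈ s, b i := by
  classical
  induction s using Finset.induction with
  | empty =>
    rw [Finset.prod_empty, Finset.sum_empty, ← C_1]
    rw [degreeOf_C]
  | insert a s ha ih =>
    rw [Finset.prod_insert ha, Finset.sum_insert ha]
    exact (degreeOf_mul_le _ _ _).trans
      (add_le_add (h a (mem_insert_self _ _)) (ih fun i hi => h i (mem_insert_of_mem hi)))

private lemma degreeOf_neg' (v : σ) (f : MvPolynomial σ R) : degreeOf v (-f) = degreeOf v f := by
  simp [degreeOf_eq_sup, support_neg]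

private lemma degreeOf_sub_le' (v : σ) (f g : MvPolynomial σ R) :
    degreeOf v (f - g) ≤ max (degreeOf v f) (degreeOf v g) := by
  rw [sub_eq_add_neg]
  exact (degreeOf_add_le _ _ _).trans (by rw [degreeOf_neg'])

private lemma pair_count (v : Fin n) :
    ∑ i : Fin n, ∑ j ∈ Finset.univ.filter (fun j => i < j),
      (if v = i ∨ v = j then 1 else 0) ≤ n - 1 := by
  classical
  have step : ∀ i : Fin n, ∑ j ∈ Finset.univ.filter (fun j => i < j),
      (if v = i ∨ v = j then 1 else 0)
      ≤ (if v = i then 1 else 0) * (Finset.univ.filter (fun j => (i:Fin n) < j)).card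
        + (if i < v then 1 else 0) := by
    intro i
    calc ∑ j ∈ Finset.univ.filter (fun j => i < j), (if v = i ∨ v = j then 1 else 0)
        ≤ ∑ j ∈ Finset.univ.filter (fun j => i < j),
            ((if v = i then 1 else 0) + (if v = j then 1 else 0)) := by
          apply Finset.sum_le_sum; intro j _; split_ifs <;> simp_all
      _ = (if v = i then 1 else 0) * (Finset.univ.filter (fun j => (i:Fin n) < j)).card
            + (if i < v then 1 else 0) := by
          rw [Finset.sum_add_distrib, Finset.sum_const, smul_eq_mul, mul_comm]
          congr 1
          have : ∀ j : Fin n, (if v = j then (1:ℕ) else 0) = if j = v then 1 else 0 := by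
            intro j; simp [eq_comm]
          rw [Finset.sum_congr rfl fun j _ => this j, Finset.sum_ite_eq' _ v (fun _ => 1)]
          simp
  refine (Finset.sum_le_sum fun i _ => step i).trans ?_
  rw [Finset.sum_add_distrib]
  have e1 : ∑ i : Fin n, (if v = i then 1 else 0) * (Finset.univ.filter (fun j => (i:Fin n) < j)).card
      = (Finset.univ.filter (fun j => v < j)).card := by
    rw [Finset.sum_eq_single v]
    · simp
    · intro i _ hiv; simp [Ne.symm hiv]
    · simp
  have e2 : ∑ i : Fin n, (if i < v then (1:ℕ) else 0) = (Finset.univ.filter (fun i => i < v)).card := by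
    rw [Finset.card_filter]
  rw [e1, e2]
  have hdisj : Disjoint (Finset.univ.filter (fun j => v < j)) (Finset.univ.filter (fun i => i < v)) := by
    rw [Finset.disjoint_filter]
    intro x _ h1 h2
    exact absurd (h1.trans h2) (lt_irrefl v)
  rw [← Finset.card_union_of_disjoint hdisj]
  have hsub : (Finset.univ.filter (fun j => v < j)) ∪ (Finset.univ.filter (fun i => i < v))
      ⊆ Finset.univ.erase v := by
    intro x hx
    rw [Finset.mem_union, Finset.mem_filter, Finset.mem_filter] at hx
    rw [Finset.mem_erase]
    rcases hx with h | h
    · exact ⟨(ne_of_lt h.2).symm, Finset.mem_univ x⟩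
    · exact ⟨ne_of_lt h.2, Finset.mem_univ x⟩
  refine (Finset.card_le_card hsub).trans ?_
  rw [Finset.card_erase_of_mem (Finset.mem_univ v)]
  simp

private lemma deg_selberg (p n a b c : ℕ) [Fact p.Prime] (v : Fin n) :
    degreeOf v (selbergPoly p n a b c) ≤ 2 * c * (n - 1) + (a + b) := by
  classical
  have hXX : ∀ i j : Fin n, degreeOf v ((X i - X j : MvPolynomial (Fin n) (ZMod p)))
      ≤ (if v = i ∨ v = j then 1 else 0) := by
    intro i j
    refine (degreeOf_sub_le' v _ _).trans ?_
    rw [degreeOf_X, degreeOf_X]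
    split_ifs <;> simp_all
  have h1 : degreeOf v (∏ i : Fin n, ∏ j ∈ Finset.univ.filter (fun j => (i:Fin n) < j),
      ((X i - X j : MvPolynomial (Fin n) (ZMod p))) ^ (2 * c)) ≤ 2 * c * (n - 1) := by
    refine (degreeOf_prod_le' v Finset.univ _
      (fun i => ∑ j ∈ Finset.univ.filter (fun j => (i:Fin n) < j),
        (2*c) * (if v = i ∨ v = j then 1 else 0))
      (fun i _ => degreeOf_prod_le' v _ _ _ (fun j _ =>
        (degreeOf_pow_le v _ _).trans (Nat.mul_le_mul_left _ (hXX i j))))).trans ?_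
    have : ∑ i : Fin n, ∑ j ∈ Finset.univ.filter (fun j => (i:Fin n) < j),
        (2*c) * (if v = i ∨ v = j then 1 else 0)
        = (2*c) * ∑ i : Fin n, ∑ j ∈ Finset.univ.filter (fun j => (i:Fin n) < j),
        (if v = i ∨ v = j then 1 else 0) := by
      rw [Finset.mul_sum]
      exact Finset.sum_congr rfl fun i _ => (Finset.mul_sum _ _ _).symm
    rw [this]
    exact Nat.mul_le_mul_left _ (pair_count v)
  have h2 : degreeOf v (∏ i : Fin n, (X i : MvPolynomial (Fin n) (ZMod p)) ^ a * (1 - X i) ^ b)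
      ≤ a + b := by
    refine (degreeOf_prod_le' v Finset.univ _ (fun i => if v = i then a + b else 0)
      (fun i _ => ?_)).trans ?_
    · refine (degreeOf_mul_le _ _ _).trans ?_
      have hx : degreeOf v ((X i : MvPolynomial (Fin n) (ZMod p)) ^ a) ≤ if v = i then a else 0 := by
        refine (degreeOf_pow_le _ _ _).trans ?_
        rw [degreeOf_X]
        split_ifs <;> omega
      have hy : degreeOf v ((1 - X i : MvPolynomial (Fin n) (ZMod p)) ^ b) ≤ if v = i then b else 0 := by
        refine (degreeOf_pow_le _ _ _).trans ?_
        have hs : degreeOf v ((1 - X i : MvPolynomial (Fin n) (ZMod p))) ≤ if v = i then 1 else 0 := by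
          refine (degreeOf_sub_le' v _ _).trans ?_
          rw [← C_1, degreeOf_C, degreeOf_X]
          simp
        refine (Nat.mul_le_mul_left b hs).trans ?_
        split_ifs <;> omega
      refine (add_le_add hx hy).trans ?_
      split_ifs <;> omega
    · rw [Finset.sum_ite_eq _ v (fun _ => a + b)]
      simp
  exact (degreeOf_mul_le _ _ _).trans (add_le_add h1 h2)

private lemma prod_X_pow_univ {R : Type*} [CommSemiring R] (d : Fin n → ℕ) :
    ∏ i : Fin n, (X i : MvPolynomial (Fin n) R) ^ d i
      = monomial (Finsupp.equivFunOnFinite.symm d) 1 := by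
  rw [← prod_X_pow_eq_monomial]
  refine (Finset.prod_subset (Finset.subset_univ _) ?_).symm
  intro x _ hx
  have : (Finsupp.equivFunOnFinite.symm d) x = 0 := by
    simpa using (Finsupp.notMem_support_iff.mp hx)
  simp only [Finsupp.coe_equivFunOnFinite_symm] at this ⊢
  rw [this, pow_zero]

private lemma one_sub_X_pow {R : Type*} [CommRing R] (i : Fin n) (k : ℕ) :
    ((1 : MvPolynomial (Fin n) R) - X i) ^ k
      = ∑ j ∈ Finset.range (k + 1), C ((-1 : R) ^ j * (k.choose j : R)) * (X i) ^ j := by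
  rw [sub_eq_neg_add, add_pow]
  refine Finset.sum_congr rfl fun j hj => ?_
  rw [neg_pow, one_pow, map_mul, map_pow, map_neg, map_one, map_natCast]
  ring

private lemma coeffT_prod [Fact p.Prime] (k : Fin n → ℕ) :
    coeff (Finsupp.equivFunOnFinite.symm fun _ : Fin n => p - 1)
      (∏ i : Fin n, ((1 : MvPolynomial (Fin n) (ZMod p)) - X i) ^ k i)
      = ∏ i : Fin n, ((-1 : ZMod p) ^ (p - 1) * ((k i).choose (p - 1) : ZMod p)) := by
  classical
  simp_rw [one_sub_X_pow]
  rw [Finset.prod_univ_sum]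
  rw [MvPolynomial.coeff_sum]
  have hterm : ∀ d : Fin n → ℕ,
      coeff (Finsupp.equivFunOnFinite.symm fun _ : Fin n => p - 1)
        (∏ i : Fin n, C ((-1 : ZMod p) ^ (d i) * ((k i).choose (d i) : ZMod p)) * X i ^ d i)
      = if d = (fun _ => p - 1) then
          ∏ i : Fin n, ((-1 : ZMod p) ^ (p-1) * ((k i).choose (p-1) : ZMod p)) else 0 := by
    intro d
    rw [Finset.prod_mul_distrib, ← map_prod, prod_X_pow_univ, coeff_C_mul, coeff_monomial]
    have hiff : (Finsupp.equivFunOnFinite.symm d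
        = Finsupp.equivFunOnFinite.symm fun _ : Fin n => p - 1) ↔ d = (fun _ : Fin n => p - 1) :=
      Equiv.apply_eq_iff_eq _
    split_ifs with h1 h2 h2
    · subst h2; rw [mul_one]
    · exact absurd (hiff.mp h1) h2
    · exact absurd (hiff.mpr h2) h1
    · rw [mul_zero]
  rw [Finset.sum_congr rfl fun d _ => hterm d]
  rw [Finset.sum_ite_eq' (Fintype.piFinset fun i => Finset.range (k i + 1))
    (fun _ : Fin n => p - 1)
    (fun _ => ∏ i : Fin n, ((-1 : ZMod p) ^ (p-1) * ((k i).choose (p-1) : ZMod p)))]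
  split_ifs with hmem
  · rfl
  · rw [Fintype.mem_piFinset] at hmem
    push_neg at hmem
    obtain ⟨i0, hi0⟩ := hmem
    rw [Finset.mem_range, not_lt] at hi0
    refine (Finset.prod_eq_zero (Finset.mem_univ i0) ?_).symm
    have : (k i0).choose (p - 1) = 0 := Nat.choose_eq_zero_of_lt (by omega)
    rw [this]
    simp

private lemma cast_choose_eq [Fact p.Prime] (k : ℕ) (hk : k ≤ 2 * p - 2) :
    ((k.choose (p - 1) : ℕ) : ZMod p) = if k = p - 1 then 1 else 0 := by
  have hp : p.Prime := Fact.out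
  have hp2 : 2 ≤ p := hp.two_le
  rcases lt_trichotomy k (p - 1) with hlt | heq | hgt
  · rw [Nat.choose_eq_zero_of_lt hlt, if_neg (by omega)]
    simp
  · rw [heq, Nat.choose_self, if_pos rfl]
    simp
  · rw [if_neg (by omega)]
    have hdvd : p ∣ k.choose (p - 1) :=
      Nat.Prime.dvd_choose hp (by omega) (by omega) (by omega)
    exact (ZMod.natCast_eq_zero_iff _ _).mpr hdvd

private lemma coeff_aeval_one_sub [Fact p.Prime] (hodd : p ≠ 2)
    (f : MvPolynomial (Fin n) (ZMod p))
    (hf : ∀ k ∈ f.support, ∀ i, k i ≤ 2 * p - 2) :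
    coeff (Finsupp.equivFunOnFinite.symm fun _ : Fin n => p - 1)
        (aeval (fun i : Fin n => (1 : MvPolynomial (Fin n) (ZMod p)) - X i) f)
      = coeff (Finsupp.equivFunOnFinite.symm fun _ : Fin n => p - 1) f := by
  classical
  set T : Fin n →₀ ℕ := Finsupp.equivFunOnFinite.symm fun _ : Fin n => p - 1 with hT
  have hp : p.Prime := Fact.out
  have heven : Even (p - 1) := Nat.Odd.sub_odd (hp.odd_of_ne_two hodd) odd_one
  conv_lhs => rw [f.as_sum]
  rw [map_sum, MvPolynomial.coeff_sum]
  have key : ∀ k ∈ f.support,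
      coeff T (aeval (fun i : Fin n => (1 : MvPolynomial (Fin n) (ZMod p)) - X i)
        (monomial k (coeff k f)))
      = if k = T then coeff k f else 0 := by
    intro k hk
    rw [aeval_monomial]
    have hprod : (Finsupp.prod k fun i e =>
        ((fun i : Fin n => (1 : MvPolynomial (Fin n) (ZMod p)) - X i) i) ^ e)
        = ∏ i : Fin n, ((1 : MvPolynomial (Fin n) (ZMod p)) - X i) ^ k i := by
      rw [Finsupp.prod]
      apply Finset.prod_subset (Finset.subset_univ _)
      intro x _ hx
      rw [Finsupp.notMem_support_iff.mp hx, pow_zero]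
    rw [hprod, MvPolynomial.algebraMap_eq, coeff_C_mul, coeffT_prod]
    have hfac : ∀ i, ((-1 : ZMod p) ^ (p - 1) * ((k i).choose (p - 1) : ZMod p))
        = if k i = p - 1 then 1 else 0 := by
      intro i
      rw [heven.neg_one_pow, one_mul, cast_choose_eq (k i) (hf k hk i)]
    rw [Finset.prod_congr rfl fun i _ => hfac i]
    by_cases hkT : k = T
    · have : ∀ i : Fin n, k i = p - 1 := by
        intro i; rw [hkT]; simp [hT]
      rw [if_pos hkT, Finset.prod_congr rfl fun i _ => if_pos (this i), Finset.prod_const_one,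
        mul_one]
    · rw [if_neg hkT]
      have : ∃ i, k i ≠ p - 1 := by
        by_contra hcon
        push_neg at hcon
        exact hkT (Finsupp.ext fun i => by simp [hcon i, hT])
      obtain ⟨i0, hi0⟩ := this
      rw [Finset.prod_eq_zero (Finset.mem_univ i0) (by rw [if_neg hi0]), mul_zero]
  rw [Finset.sum_congr rfl key, Finset.sum_ite_eq' f.support T (fun k => coeff k f)]
  split_ifs with h
  · rfl
  · exact (MvPolynomial.notMem_support_iff.mp h).symm

private lemma aeval_selbergPoly (p n a b c : ℕ) :
    aeval (fun i : Fin n => (1 : MvPolynomial (Fin n) (ZMod p)) - X i) (selbergPoly p n a b c)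
      = selbergPoly p n b a c := by
  unfold selbergPoly
  rw [map_mul, map_prod, map_prod]
  congr 1
  · refine Finset.prod_congr rfl fun i _ => ?_
    rw [map_prod]
    refine Finset.prod_congr rfl fun j _ => ?_
    rw [map_pow, map_sub, aeval_X, aeval_X]
    have : ((1 : MvPolynomial (Fin n) (ZMod p)) - X i) - (1 - X j) = -(X i - X j) := by ring
    rw [this, Even.neg_pow (even_two_mul c)]
  · refine Finset.prod_congr rfl fun i _ => ?_
    rw [map_mul, map_pow, map_pow, aeval_X, map_sub, map_one, aeval_X, sub_sub_cancel]
    ring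

end Aux

theorem selbergInt_symm (p n a b c : ℕ) [Fact p.Prime] (hodd : p ≠ 2) (hn : 1 ≤ n)
    (h : a + b + (2 * n - 2) * c < 2 * p - 1) :
    selbergInt p n a b c = selbergInt p n b a c := by
  have hp : p.Prime := Fact.out
  have hp2 : 2 ≤ p := hp.two_le
  have heq : 2 * c * (n - 1) = (2 * n - 2) * c := by
    obtain ⟨m, rfl⟩ := Nat.exists_eq_add_of_le hn
    have h1 : 1 + m - 1 = m := by omega
    have h2 : 2 * (1 + m) - 2 = 2 * m := by omega
    rw [h1, h2]
    ring
  have hf : ∀ k ∈ (selbergPoly p n a b c).support, ∀ i, k i ≤ 2 * p - 2 := by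
    intro k hk i
    have h1 : k i ≤ degreeOf i (selbergPoly p n a b c) := by
      rw [degreeOf_eq_sup]
      exact Finset.le_sup (f := fun m => m i) hk
    have h2 := deg_selberg p n a b c i
    rw [heq] at h2
    have h3 : k i ≤ (2 * n - 2) * c + (a + b) := h1.trans h2
    omega
  have key := coeff_aeval_one_sub hodd (selbergPoly p n a b c) hf
  rw [aeval_selbergPoly] at key
  exact key.symm
end

section
/- For any positive integers n and c, the constant term of ∏_{1≤i<j≤n}(1 - x_i/x_j)^c (1 - x_j/x_i)^c as a Laurent polynomial over ℚ equals (cn)!/(c!)^n (Dyson's identity, equal-parameter case). -/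
/-!
Good's proof. For a finite set `T` of variables and exponents `a`, let
`F_T(a) = ∏_{j ≠ i ∈ T} (1 - x_j / x_i) ^ a_j` (`dysonProduct T a`). Lagrange interpolation at `0` through the nodes
`x_i` gives `∑_j ∏_{i ≠ j} (1 - x_j / x_i)⁻¹ = 1`, so `F_T(a) = ∑_j F_T(a - e_j)` when every
`a_j > 0`; the multinomial coefficients satisfy the same recurrence. If `a_j = 0`, then `x_j`
occurs in `F_T(a)` only through the factors `(1 - x_k / x_j) ^ a_k`, which are `1` plus terms
of negative degree in `x_j`, so they do not change the constant term, which is therefore that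
of `F_{T - j}(a)`. By induction the constant term of `F_T(a)` is the multinomial coefficient
of `a`, and Dyson's product is `F(c, …, c)`.
-/

open Finset

/-- The Laurent monomial `x_i^d` in the ring of Laurent polynomials in `n` variables,
modeled as the monoid algebra of `ℚ` over the additive group of exponent vectors. -/
noncomputable def lvar (n : ℕ) (i : Fin n) (d : ℤ) : AddMonoidAlgebra ℚ (Fin n → ℤ) :=
  AddMonoidAlgebra.single (Pi.single i d) 1

/-- The constant term of a Laurent polynomial: the coefficient of the zero exponent vector. -/
noncomputable def constTerm (n : ℕ) (P : AddMonoidAlgebra ℚ (Fin n → ℤ)) : ℚ := P.coeff 0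

open Nat Pointwise

theorem prod_pow_eq_sum_prod_pow_update {R ι : Type*} [CommSemiring R] [DecidableEq ι]
    {s : Finset ι} {Q : ι → R} (hQ : ∑ j ∈ s, ∏ k ∈ s.erase j, Q k = ∏ k ∈ s, Q k)
    {a : ι → ℕ} (ha : ∀ k ∈ s, a k ≠ 0) :
    ∏ k ∈ s, Q k ^ a k = ∑ j ∈ s, ∏ k ∈ s, Q k ^ Function.update a j (a j - 1) k := by
  calc ∏ k ∈ s, Q k ^ a k = (∏ k ∈ s, Q k ^ (a k - 1)) * ∏ k ∈ s, Q k := by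
        rw [← prod_mul_distrib]
        exact prod_congr rfl fun k hk => (pow_sub_one_mul (ha k hk) _).symm
    _ = ∑ j ∈ s, (∏ k ∈ s, Q k ^ (a k - 1)) * ∏ k ∈ s.erase j, Q k := by rw [← hQ, mul_sum]
    _ = ∑ j ∈ s, ∏ k ∈ s, Q k ^ Function.update a j (a j - 1) k := sum_congr rfl fun j hj => by
        rw [← mul_prod_erase s _ hj, ← mul_prod_erase s (fun k => Q k ^ _) hj,
          Function.update_self, mul_assoc, ← prod_mul_distrib]
        refine congrArg _ (prod_congr rfl fun k hk => ?_)
        rw [Function.update_of_ne (ne_of_mem_erase hk),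
          pow_sub_one_mul (ha k (mem_of_mem_erase hk))]

theorem Finset.sum_update_sub_one {ι : Type*} [DecidableEq ι] {s : Finset ι} {a : ι → ℕ}
    {j : ι} (hj : j ∈ s) (haj : a j ≠ 0) :
    ∑ i ∈ s, Function.update a j (a j - 1) i = ∑ i ∈ s, a i - 1 := by
  rw [sum_update_of_mem hj, sdiff_singleton_eq_erase, ← add_sum_erase s a hj]
  omega

theorem Nat.multinomial_eq_sum_multinomial_update {ι : Type*} [DecidableEq ι] {s : Finset ι}
    (hs : s.Nonempty) {a : ι → ℕ} (ha : ∀ k ∈ s, a k ≠ 0) :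
    Nat.multinomial s a = ∑ j ∈ s, Nat.multinomial s (Function.update a j (a j - 1)) := by
  have hS : ∑ i ∈ s, a i ≠ 0 := by
    obtain ⟨j, hj⟩ := hs
    exact (sum_pos' (fun _ _ => Nat.zero_le _) ⟨j, hj, Nat.pos_of_ne_zero (ha j hj)⟩).ne'
  have hterm : ∀ j ∈ s, (∏ i ∈ s, (a i)!) * Nat.multinomial s (Function.update a j (a j - 1)) =
      a j * (∑ i ∈ s, a i - 1)! := fun j hj => by
    rw [← sum_update_sub_one hj (ha j hj), ← Nat.multinomial_spec, ← mul_assoc]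
    congr 1
    rw [← mul_prod_erase s _ hj, ← mul_prod_erase s (fun i => (Function.update a j _ i)!) hj,
      Function.update_self, ← mul_assoc, Nat.mul_factorial_pred (ha j hj)]
    exact congrArg _ (prod_congr rfl fun i hi => by rw [Function.update_of_ne (ne_of_mem_erase hi)])
  refine Nat.eq_of_mul_eq_mul_left (prod_pos (s := s) fun i _ => (a i).factorial_pos) ?_
  rw [Nat.multinomial_spec, mul_sum, sum_congr rfl hterm, ← sum_mul, Nat.mul_factorial_pred hS]

theorem Nat.multinomial_const {ι : Type*} (s : Finset ι) (c : ℕ) :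
    (Nat.multinomial s fun _ => c : ℚ) = (s.card * c)! / (c ! : ℚ) ^ s.card := by
  have h := Nat.multinomial_spec s fun _ => c
  simp only [prod_const, sum_const, smul_eq_mul] at h
  rw [eq_div_iff (by positivity), mul_comm]
  exact_mod_cast h

theorem prod_filter_lt_mul_swap_eq_prod_erase {ι M : Type*} [Fintype ι] [LinearOrder ι]
    [CommMonoid M] (f : ι → ι → M) :
    ∏ i, ∏ j ∈ univ.filter (fun j => i < j), f i j * f j i = ∏ i, ∏ j ∈ univ.erase i, f i j := by
  have hsplit : ∀ i : ι,
      univ.erase i = univ.filter (fun j => i < j) ∪ univ.filter (fun j => j < i) :=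
    fun i => by ext j; simp [lt_or_lt_iff_ne, ne_comm]
  have hswap : ∏ i, ∏ j ∈ univ.filter (fun j => i < j), f j i =
      ∏ i, ∏ j ∈ univ.filter (fun j => j < i), f i j :=
    prod_comm' (by simp)
  simp_rw [prod_mul_distrib, hswap, ← prod_mul_distrib, hsplit]
  refine prod_congr rfl fun i _ => (prod_union ?_).symm
  exact disjoint_filter.2 fun j _ h h' => lt_asymm h h'

theorem sum_prod_inv_one_sub_div_eq_one {K ι : Type*} [Field K] [DecidableEq ι]
    {s : Finset ι} {v : ι → K} (hvs : Set.InjOn v s) (hv : ∀ i ∈ s, v i ≠ 0)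
    (hs : s.Nonempty) :
    ∑ j ∈ s, ∏ i ∈ s.erase j, (1 - v j / v i)⁻¹ = 1 := by
  calc ∑ j ∈ s, ∏ i ∈ s.erase j, (1 - v j / v i)⁻¹
      = ∑ j ∈ s, (Lagrange.basis s v j).eval 0 := by
        -- `(1 - v j / v i)⁻¹ = (0 - v i) / (v j - v i)`
        refine sum_congr rfl fun j hj => ?_
        rw [Lagrange.basis, Polynomial.eval_prod]
        refine prod_congr rfl fun i hi => ?_
        obtain ⟨hij, hi⟩ := mem_erase.1 hi
        have hvij : v j - v i ≠ 0 := sub_ne_zero.2 fun h => hij (hvs hi hj h.symm)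
        have hvij' : v i - v j ≠ 0 := sub_ne_zero.2 fun h => hij (hvs hi hj h)
        have hvi := hv i hi
        simp only [Lagrange.basisDivisor, Polynomial.eval_mul, Polynomial.eval_C,
          Polynomial.eval_sub, Polynomial.eval_X]
        field_simp
        ring
    _ = (∑ j ∈ s, Lagrange.basis s v j).eval 0 := (Polynomial.eval_finsetSum _ _ _).symm
    _ = 1 := by rw [Lagrange.sum_basis hvs hs, Polynomial.eval_one]

theorem sum_prod_erase_prod_one_sub_mul_eq_prod {R ι : Type*} [CommRing R] [IsDomain R]
    [DecidableEq ι] {s : Finset ι} {x y : ι → R} (hxy : ∀ i ∈ s, x i * y i = 1)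
    (hx : Set.InjOn x s) (hs : s.Nonempty) :
    ∑ j ∈ s, ∏ k ∈ s.erase j, ∏ i ∈ s.erase k, (1 - x k * y i) =
      ∏ k ∈ s, ∏ i ∈ s.erase k, (1 - x k * y i) := by
  let f := algebraMap R (FractionRing R)
  have hf : Function.Injective f := IsFractionRing.injective R _
  let v i := f (x i)
  have hv : ∀ i ∈ s, v i ≠ 0 := fun i hi h =>
    one_ne_zero (hf (by simpa [v, ← map_mul, hxy i hi] using congrArg (· * f (y i)) h))
  have hvs : Set.InjOn v s := hf.comp_injOn hx
  let q k := ∏ i ∈ s.erase k, (1 - v k / v i)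
  have hfq : ∀ k ∈ s, f (∏ i ∈ s.erase k, (1 - x k * y i)) = q k := fun k hk => by
    rw [map_prod]
    refine prod_congr rfl fun i hi => ?_
    have hfy : f (y i) = (v i)⁻¹ := eq_inv_of_mul_eq_one_right
      (by rw [← map_mul, hxy i (mem_of_mem_erase hi), map_one])
    rw [map_sub, map_one, map_mul, hfy, div_eq_mul_inv]
  have hq : ∀ k ∈ s, q k ≠ 0 := fun k hk => prod_ne_zero_iff.2 fun i hi => by
    obtain ⟨hik, hi⟩ := mem_erase.1 hi
    rw [sub_ne_zero, ne_comm, Ne, div_eq_one_iff_eq (hv i hi)]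
    exact fun h => hik (hvs hk hi h).symm
  apply hf
  rw [map_sum, map_prod, prod_congr rfl hfq]
  calc ∑ j ∈ s, f (∏ k ∈ s.erase j, ∏ i ∈ s.erase k, (1 - x k * y i))
      = ∑ j ∈ s, (∏ k ∈ s, q k) * (q j)⁻¹ := sum_congr rfl fun j hj => by
        rw [map_prod, prod_congr rfl fun k hk => hfq k (mem_of_mem_erase hk),
          ← mul_prod_erase s q hj, mul_comm, ← mul_assoc, inv_mul_cancel₀ (hq j hj), one_mul]
    _ = ∏ k ∈ s, q k := by
        have hsum : ∑ j ∈ s, (q j)⁻¹ = 1 := by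
          simp_rw [q, ← prod_inv_distrib]
          exact sum_prod_inv_one_sub_div_eq_one hvs hv hs
        rw [← mul_sum, hsum, mul_one]

namespace AddMonoidAlgebra

variable {R G : Type*} [CommRing R] [AddMonoid G]

theorem mul_mem_supported_add {s t : Set G} {x y : AddMonoidAlgebra R G}
    (hx : x ∈ supported R R s) (hy : y ∈ supported R R t) : x * y ∈ supported R R (s + t) := by
  classical
  intro g hg
  obtain ⟨p, hp, q, hq, rfl⟩ := mem_add.1 (support_coeff_mul_subset x y hg)
  exact Set.add_mem_add (hx hp) (hy hq)

variable (R) in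
def oneAddNeg (deg : G →+ ℤ) : Submonoid (AddMonoidAlgebra R G) where
  carrier := {x | x - 1 ∈ supported R R {g | deg g < 0}}
  one_mem' := by simp
  mul_mem' {x y} hx hy := by
    have hneg : {g | deg g < 0} + {g | deg g < 0} ⊆ {g | deg g < 0} :=
      Set.add_subset_iff.2 fun a ha b hb => by simp only [Set.mem_ofPred_eq, map_add] at *; omega
    rw [Set.mem_ofPred_eq, show x * y - 1 = (x - 1) + (y - 1) + (x - 1) * (y - 1) by noncomm_ring]
    exact add_mem (add_mem hx hy) (supported_mono hneg (mul_mem_supported_add hx hy))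

theorem mem_oneAddNeg {deg : G →+ ℤ} {x : AddMonoidAlgebra R G} :
    x ∈ oneAddNeg R deg ↔ x - 1 ∈ supported R R {g | deg g < 0} := Iff.rfl

theorem coeff_zero_mul_of_mem_oneAddNeg {deg : G →+ ℤ} {P x : AddMonoidAlgebra R G}
    (hP : P ∈ gradeBy R deg 0) (hx : x ∈ oneAddNeg R deg) : (P * x).coeff 0 = P.coeff 0 := by
  have hzero : (0 : G) ∉ deg ⁻¹' {0} + {g | deg g < 0} := by
    rintro ⟨p, hp, q, hq, hpq⟩
    have := congrArg deg hpq
    simp only [Set.mem_preimage, Set.mem_singleton_iff, Set.mem_ofPred_eq, map_add, map_zero] at *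
    omega
  have hPx : (P * (x - 1)).coeff 0 = 0 := (mem_supported'.1 (mul_mem_supported_add hP hx)) 0 hzero
  rw [show P * x = P + P * (x - 1) by rw [mul_sub, mul_one, add_sub_cancel], coeff_add,
    Finsupp.add_apply, hPx, add_zero]

end AddMonoidAlgebra

open AddMonoidAlgebra

section Laurent

variable {n : ℕ}

theorem lvar_mul_lvar (i j : Fin n) (a b : ℤ) :
    lvar n i a * lvar n j b = single (Pi.single i a + Pi.single j b) 1 := by
  rw [lvar, lvar, single_mul_single, one_mul]

theorem lvar_one_mul_lvar_neg_one (i : Fin n) : lvar n i 1 * lvar n i (-1) = 1 := by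
  rw [lvar_mul_lvar, ← Pi.single_add, add_neg_cancel, Pi.single_zero, one_def]

theorem lvar_one_injective : Function.Injective (lvar n · 1) := fun i j h => by
  have := congrFun (single_left_injective one_ne_zero h) i
  by_contra hij
  simp [hij] at this

theorem one_sub_lvar_mul_mem_gradeBy {i j k : Fin n} (hi : i ≠ j) (hk : k ≠ j) :
    1 - lvar n k 1 * lvar n i (-1) ∈ gradeBy ℚ (Pi.evalAddMonoidHom _ j) 0 := by
  refine sub_mem SetLike.GradedOne.one_mem ?_
  have := single_mem_gradeBy (R := ℚ) (Pi.evalAddMonoidHom (fun _ => ℤ) j)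
    (Pi.single k 1 + Pi.single i (-1)) 1
  simpa [lvar_mul_lvar, Pi.single_apply, hi.symm, hk.symm] using this

theorem one_sub_lvar_mul_mem_oneAddNeg {j k : Fin n} (hk : k ≠ j) :
    1 - lvar n k 1 * lvar n j (-1) ∈ oneAddNeg ℚ (Pi.evalAddMonoidHom _ j) := by
  rw [mem_oneAddNeg, sub_sub_cancel_left, lvar_mul_lvar]
  refine neg_mem (mem_supported.2 fun g hg => ?_)
  rw [coeff_single, Finset.mem_coe, Finsupp.mem_support_single] at hg
  simp [hg.1, hk]

noncomputable def dysonFactor (T : Finset (Fin n)) (j : Fin n) : AddMonoidAlgebra ℚ (Fin n → ℤ) :=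
  ∏ i ∈ T.erase j, (1 - lvar n j 1 * lvar n i (-1))

noncomputable def dysonProduct (T : Finset (Fin n)) (a : Fin n → ℕ) :
    AddMonoidAlgebra ℚ (Fin n → ℤ) :=
  ∏ j ∈ T, dysonFactor T j ^ a j

theorem dysonProduct_eq_sum_update {T : Finset (Fin n)} (hT : T.Nonempty) {a : Fin n → ℕ}
    (ha : ∀ k ∈ T, a k ≠ 0) :
    dysonProduct T a = ∑ j ∈ T, dysonProduct T (Function.update a j (a j - 1)) :=
  prod_pow_eq_sum_prod_pow_update
    (sum_prod_erase_prod_one_sub_mul_eq_prod (fun i _ => lvar_one_mul_lvar_neg_one i)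
      lvar_one_injective.injOn hT) ha

theorem dysonProduct_eq_mul_of_eq_zero {T : Finset (Fin n)} {a : Fin n → ℕ} {j : Fin n}
    (hj : j ∈ T) (haj : a j = 0) :
    dysonProduct T a =
      dysonProduct (T.erase j) a * ∏ k ∈ T.erase j, (1 - lvar n k 1 * lvar n j (-1)) ^ a k := by
  rw [dysonProduct, ← mul_prod_erase T _ hj, haj, pow_zero, one_mul, dysonProduct,
    ← prod_mul_distrib]
  refine prod_congr rfl fun k hk => ?_
  have hjk : j ∈ T.erase k := mem_erase.2 ⟨(ne_of_mem_erase hk).symm, hj⟩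
  rw [← mul_pow, dysonFactor, dysonFactor, ← mul_prod_erase _ _ hjk, mul_comm, erase_right_comm]

theorem dysonProduct_mem_gradeBy {T : Finset (Fin n)} {j : Fin n} (hj : j ∉ T) (a : Fin n → ℕ) :
    dysonProduct T a ∈ gradeBy ℚ (Pi.evalAddMonoidHom _ j) 0 := by
  have hfactor : ∀ k ∈ T, dysonFactor T k ∈ gradeBy ℚ (Pi.evalAddMonoidHom _ j) 0 :=
    fun k hk => by
      simpa [dysonFactor] using SetLike.prod_mem_graded _ (fun _ => 0) _ fun i hi =>
        one_sub_lvar_mul_mem_gradeBy (ne_of_mem_of_not_mem (mem_of_mem_erase hi) hj)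
          (ne_of_mem_of_not_mem hk hj)
  simpa [dysonProduct] using SetLike.prod_pow_mem_graded _ (fun _ => 0) _ a hfactor

theorem constTerm_dysonProduct (T : Finset (Fin n)) (a : Fin n → ℕ) :
    constTerm n (dysonProduct T a) = Nat.multinomial T a := by
  induction h : #T + ∑ i ∈ T, a i using Nat.strong_induction_on generalizing T a with
  | _ N ih =>
  subst h
  rcases T.eq_empty_or_nonempty with rfl | hT
  · simp [dysonProduct, constTerm, one_def]
  by_cases hpos : ∀ k ∈ T, a k ≠ 0
  · rw [constTerm, dysonProduct_eq_sum_update hT hpos, coeff_sum, Finsupp.finsetSum_apply,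
      Nat.multinomial_eq_sum_multinomial_update hT hpos]
    push_cast
    refine sum_congr rfl fun j hj => ih _ ?_ _ _ rfl
    rw [sum_update_sub_one hj (hpos j hj)]
    have := single_le_sum (fun i _ => Nat.zero_le (a i)) hj
    have := hpos j hj
    omega
  · obtain ⟨j, hj, haj⟩ : ∃ j ∈ T, a j = 0 := by simpa using hpos
    have hG : ∏ k ∈ T.erase j, (1 - lvar n k 1 * lvar n j (-1)) ^ a k ∈
        oneAddNeg ℚ (Pi.evalAddMonoidHom _ j) :=
      prod_mem fun k hk => pow_mem (one_sub_lvar_mul_mem_oneAddNeg (ne_of_mem_erase hk)) _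
    rw [constTerm, dysonProduct_eq_mul_of_eq_zero hj haj,
      coeff_zero_mul_of_mem_oneAddNeg (dysonProduct_mem_gradeBy (notMem_erase j T) a) hG,
      ← constTerm, ih _ ?_ _ _ rfl,
      Nat.multinomial_congr_of_sdiff (erase_subset j T)
        (by simpa [sdiff_erase_self hj] using haj) fun _ _ => rfl]
    rw [card_erase_of_mem hj, sum_erase T haj]
    have := card_pos.2 hT
    omega

end Laurent

theorem dyson_general (n c : ℕ) :
    constTerm n
      (∏ i : Fin n, ∏ j ∈ Finset.univ.filter (fun j => i < j),
        (1 - lvar n i 1 * lvar n j (-1)) ^ c * (1 - lvar n j 1 * lvar n i (-1)) ^ c) =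
      ((c * n).factorial : ℚ) / (c.factorial : ℚ) ^ n := by
  have hprod : ∏ i : Fin n, ∏ j ∈ univ.filter (fun j => i < j),
        (1 - lvar n i 1 * lvar n j (-1)) ^ c * (1 - lvar n j 1 * lvar n i (-1)) ^ c =
      dysonProduct univ fun _ => c := by
    simp_rw [prod_filter_lt_mul_swap_eq_prod_erase, dysonProduct, dysonFactor, prod_pow]
  rw [hprod, constTerm_dysonProduct, Nat.multinomial_const, Finset.card_univ, Fintype.card_fin,
    mul_comm n]

theorem dyson (n c : ℕ) (hn : 0 < n) (hc : 0 < c) :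
    constTerm n
      (∏ i : Fin n, ∏ j ∈ Finset.univ.filter (fun j => i < j),
        (1 - lvar n i 1 * lvar n j (-1)) ^ c * (1 - lvar n j 1 * lvar n i (-1)) ^ c) =
      ((c * n).factorial : ℚ) / (c.factorial : ℚ) ^ n :=
  dyson_general n c
end

section
/- Let p be an odd prime, n ≥ 1, k with 1 ≤ k ≤ n, and a, b, c nonnegative integers. Define S_{k,n}(a,b,c) as the coefficient of (x_1···x_n)^(p-1) in x_1···x_k · ∏_{1≤i<j≤n}(x_i-x_j)^{2c} ∏_{i=1}^n x_i^a(1-x_i)^b over F_p. If a + b + (2n-2)c < 2p - 2, then (a+b+(2n-k-1)c+2) · S_{k,n}(a,b,c) = (a+(n-k)c+1) · S_{k-1,n}(a,b,c) in F_p (Aomoto recursion over F_p). -/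
open MvPolynomial Finset

/-- `S_{k,n}(a,b,c)`: the coefficient of `x_1^(p-1) ⋯ x_n^(p-1)` in
`x_1 ⋯ x_k ∏_{i<j}(x_i-x_j)^{2c} ∏_i x_i^a (1-x_i)^b`. -/
noncomputable def selbergIntK (p n k a b c : ℕ) : ZMod p :=
  MvPolynomial.coeff (Finsupp.equivFunOnFinite.symm fun _ : Fin n => p - 1)
    ((∏ i ∈ Finset.univ.filter (fun i : Fin n => (i : ℕ) < k), X i) * selbergPoly p n a b c)

/-! Write `Φ = A · B` with `A = ∏_{i<j} (x_i - x_j)^(2c)` and `B = ∏_i x_i^a (1 - x_i)^b`, and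
let `E = x_1 ⋯ x_{k-1}`. Taking the coefficient of `∏ x_i^(p-1)` kills every partial derivative
in characteristic `p`, so `∂_k (x_k (1 - x_k) E Φ)` integrates to zero. The derivatives falling
on `x_k (1 - x_k)` and on `B` contribute `(a + 1) S_{k-1} - (a + b + 2) S_k`; the derivative
falling on `A` is `Σ_{j ≠ k} 2c A / (x_k - x_j)`. Symmetrising each of these terms under
`x_k ↔ x_j`, which fixes `Φ` and the integral, turns it into `-c S_k` for the `k - 1` indices `j`
inside the block `E` and into `c (S_{k-1} - 2 S_k)` for the `n - k` indices outside it. -/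

section Integral

variable {σ R : Type*} [Fintype σ] [CommSemiring R] (p : ℕ)

noncomputable def fpIntegral : MvPolynomial σ R →ₗ[R] R :=
  lcoeff R (Finsupp.equivFunOnFinite.symm fun _ => p - 1)

variable {p}

theorem fpIntegral_apply (f : MvPolynomial σ R) :
    fpIntegral p f = coeff (Finsupp.equivFunOnFinite.symm fun _ => p - 1) f := rfl

theorem fpIntegral_pderiv [CharP R p] [NeZero p] (i : σ) (f : MvPolynomial σ R) :
    fpIntegral p (pderiv i f) = 0 := by
  rw [fpIntegral_apply, coeff_pderiv, Finsupp.equivFunOnFinite_symm_apply_apply, ← Nat.cast_succ,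
    Nat.succ_eq_add_one, Nat.sub_add_cancel NeZero.one_le, CharP.cast_eq_zero, mul_zero]

theorem fpIntegral_rename_perm (e : Equiv.Perm σ) (f : MvPolynomial σ R) :
    fpIntegral p (rename e f) = fpIntegral p f := by
  have hconst : Finsupp.mapDomain e (Finsupp.equivFunOnFinite.symm fun _ : σ => p - 1) =
      Finsupp.equivFunOnFinite.symm fun _ => p - 1 := by
    ext x
    rw [← e.apply_symm_apply x, Finsupp.mapDomain_equiv_apply]
    simp
  rw [fpIntegral_apply, fpIntegral_apply]
  nth_rewrite 1 [← hconst]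
  exact coeff_rename_mapDomain _ e.injective f _

theorem fpIntegral_natCast_mul (m : ℕ) (f : MvPolynomial σ R) :
    fpIntegral p ((m : MvPolynomial σ R) * f) = m * fpIntegral p f := by
  rw [← nsmul_eq_mul, map_nsmul, nsmul_eq_mul]

end Integral

theorem Derivation.leibniz_prod {R A : Type*} [CommSemiring R] [CommSemiring A] [Algebra R A]
    (D : Derivation R A A) {ι : Type*} [DecidableEq ι] (s : Finset ι) (f : ι → A) :
    D (∏ i ∈ s, f i) = ∑ i ∈ s, (∏ j ∈ s.erase i, f j) * D (f i) := by
  induction s using Finset.induction_on with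
  | empty => simp
  | insert a s ha ih =>
    rw [prod_insert ha, D.leibniz, ih, sum_insert ha, erase_insert ha, smul_eq_mul, smul_eq_mul,
      mul_sum, add_comm]
    congr 1
    refine sum_congr rfl fun i hi => ?_
    rw [erase_insert_of_ne (ne_of_mem_of_not_mem hi ha).symm,
      prod_insert fun h => ha (mem_of_mem_erase h)]
    ring

theorem Derivation.map_prod_eq_zero {R A : Type*} [CommSemiring R] [CommSemiring A] [Algebra R A]
    (D : Derivation R A A) {ι : Type*} [DecidableEq ι] {s : Finset ι} {f : ι → A}
    (h : ∀ i ∈ s, D (f i) = 0) : D (∏ i ∈ s, f i) = 0 := by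
  rw [D.leibniz_prod]
  exact sum_eq_zero fun i hi => by rw [h i hi, mul_zero]

theorem mul_pderiv_pow {σ R : Type*} [CommSemiring R] (i : σ) (f : MvPolynomial σ R) (m : ℕ) :
    f * pderiv i (f ^ m) = m * f ^ m * pderiv i f := by
  rcases m with _ | m
  · simp
  · rw [pderiv_pow, Nat.add_sub_cancel, pow_succ]
    ring

theorem rename_prod_X_of_forall_eq {σ R : Type*} [CommSemiring R] {S : Finset σ}
    {e : Equiv.Perm σ} (h : ∀ l ∈ S, e l = l) :
    rename e (∏ l ∈ S, X l : MvPolynomial σ R) = ∏ l ∈ S, X l := by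
  rw [map_prod]
  exact prod_congr rfl fun l hl => by rw [rename_X, h l hl]

theorem rename_swap_eq_neg_of_X_sub_X_mul {σ R : Type*} [CommRing R] [IsDomain R] [DecidableEq σ]
    {i j : σ} (hij : i ≠ j) {f r : MvPolynomial σ R} (hf : rename (Equiv.swap i j) f = f)
    (hr : (X i - X j) * r = f) : rename (Equiv.swap i j) r = -r := by
  have hswap := congrArg (rename (Equiv.swap i j)) hr
  rw [map_mul, map_sub, rename_X, rename_X, Equiv.swap_apply_left, Equiv.swap_apply_right,
    hf] at hswap
  have hsum : (X i - X j) * (r + rename (Equiv.swap i j) r) = 0 := by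
    linear_combination hr - hswap
  have hne : (X i - X j : MvPolynomial σ R) ≠ 0 := sub_ne_zero.2 fun h => hij (X_injective h)
  linear_combination (mul_eq_zero.1 hsum).resolve_left hne

section PairProducts

variable {σ M : Type*} [LinearOrder σ] [Fintype σ] [CommMonoid M] {h : σ → σ → M}

theorem prod_lt_pairs_comp_perm (hh : ∀ i j, h i j = h j i) (e : Equiv.Perm σ) :
    ∏ q : σ × σ with q.1 < q.2, h (e q.1) (e q.2) =
      ∏ q : σ × σ with q.1 < q.2, h q.1 q.2 := by
  have sort_perm : ∀ (e : Equiv.Perm σ) (q : σ × σ), q.1 < q.2 →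
      min (e q.1) (e q.2) < max (e q.1) (e q.2) ∧
      (min (e.symm (min (e q.1) (e q.2))) (e.symm (max (e q.1) (e q.2))),
        max (e.symm (min (e q.1) (e q.2))) (e.symm (max (e q.1) (e q.2)))) = q := by
    intro e q hq
    refine ⟨min_lt_max.2 (e.injective.ne hq.ne), ?_⟩
    rcases le_total (e q.1) (e q.2) with hle | hle <;> simp [hle, hq.le]
  refine prod_nbij' (fun q => (min (e q.1) (e q.2), max (e q.1) (e q.2)))
    (fun q => (min (e.symm q.1) (e.symm q.2), max (e.symm q.1) (e.symm q.2))) ?_ ?_ ?_ ?_ ?_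
  all_goals simp only [mem_filter, mem_univ, true_and]
  · exact fun q hq => (sort_perm e q hq).1
  · exact fun q hq => by simpa using (sort_perm e.symm q hq).1
  · exact fun q hq => (sort_perm e q hq).2
  · exact fun q hq => by simpa using (sort_perm e.symm q hq).2
  · intro q _
    rcases le_total (e q.1) (e q.2) with hle | hle <;> simp [hle, hh (e q.1)]

theorem prod_lt_pairs_eq_prod_erase_mul (hh : ∀ i j, h i j = h j i) (i : σ) :
    ∏ q : σ × σ with q.1 < q.2, h q.1 q.2 =
      (∏ j ∈ univ.erase i, h i j) *
        ∏ q : σ × σ with q.1 < q.2 ∧ q.1 ≠ i ∧ q.2 ≠ i, h q.1 q.2 := by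
  rw [← prod_filter_mul_prod_filter_not (univ.filter fun q : σ × σ => q.1 < q.2)
    (fun q => q.1 = i ∨ q.2 = i), filter_filter, filter_filter]
  congr 1
  · symm
    refine prod_nbij' (fun j => (min i j, max i j)) (fun q => if q.1 = i then q.2 else q.1)
      ?_ ?_ ?_ ?_ ?_
    all_goals simp only [mem_filter, mem_univ, true_and, mem_erase, ne_eq, and_true]
    · intro j hj
      rcases lt_or_gt_of_ne hj with hlt | hlt <;> simp [hlt, hlt.le]
    · rintro q ⟨hq, rfl | rfl⟩
      · simp [hq.ne']
      · simp [hq.ne]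
    · intro j hj
      rcases lt_or_gt_of_ne hj with hlt | hlt <;> simp [hlt.le, hlt.ne]
    · rintro q ⟨hq, rfl | rfl⟩
      · simp [hq.le]
      · simp [hq.ne, hq.le]
    · intro j _
      rcases le_total i j with hle | hle <;> simp [hle, hh i j]
  · congr 1
    ext q
    simp [not_or]

end PairProducts

section SelbergFactors

variable (σ R : Type*) [Fintype σ] [CommRing R]

noncomputable def selbergPairFactor [LinearOrder σ] (c : ℕ) : MvPolynomial σ R :=
  ∏ q : σ × σ with q.1 < q.2, (X q.1 - X q.2) ^ (2 * c)

noncomputable def selbergWeight (a b : ℕ) : MvPolynomial σ R :=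
  ∏ i, X i ^ a * (1 - X i) ^ b

variable {σ R}

omit [Fintype σ] in
theorem X_sub_X_pow_two_mul_comm (i j : σ) (c : ℕ) :
    (X i - X j : MvPolynomial σ R) ^ (2 * c) = (X j - X i) ^ (2 * c) := by
  rw [← neg_sub, (even_two_mul c).neg_pow]

theorem selbergPairFactor_isSymmetric [LinearOrder σ] (c : ℕ) :
    (selbergPairFactor σ R c).IsSymmetric := by
  intro e
  rw [selbergPairFactor, map_prod]
  simp only [map_pow, map_sub, rename_X]
  exact prod_lt_pairs_comp_perm (h := fun i j => (X i - X j : MvPolynomial σ R) ^ (2 * c))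
    (fun i j => X_sub_X_pow_two_mul_comm i j c) e

theorem selbergWeight_isSymmetric (a b : ℕ) : (selbergWeight σ R a b).IsSymmetric := by
  intro e
  rw [selbergWeight, map_prod]
  simp only [map_mul, map_pow, map_sub, map_one, rename_X]
  exact Equiv.prod_comp e fun i => (X i : MvPolynomial σ R) ^ a * (1 - X i) ^ b

/-- `r j` stands for `2c A / (x_i - x_j)`. -/
theorem pderiv_selbergPairFactor [LinearOrder σ] (i : σ) (c : ℕ) :
    ∃ r : σ → MvPolynomial σ R,
      pderiv i (selbergPairFactor σ R c) = ∑ j ∈ univ.erase i, r j ∧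
      ∀ j ≠ i,
        (X i - X j) * r j = ((2 * c : ℕ) : MvPolynomial σ R) * selbergPairFactor σ R c := by
  have hsplit :=
    prod_lt_pairs_eq_prod_erase_mul (fun j l => X_sub_X_pow_two_mul_comm (R := R) j l c) i
  set P := ∏ j ∈ univ.erase i, (X i - X j : MvPolynomial σ R) ^ (2 * c)
  set C := ∏ q : σ × σ with q.1 < q.2 ∧ q.1 ≠ i ∧ q.2 ≠ i,
    (X q.1 - X q.2 : MvPolynomial σ R) ^ (2 * c)
  have hC : pderiv i C = 0 := by
    refine (pderiv i).map_prod_eq_zero fun q hq => ?_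
    simp only [mem_filter, mem_univ, true_and] at hq
    rw [pderiv_pow, map_sub, pderiv_X_of_ne hq.2.1, pderiv_X_of_ne hq.2.2, sub_zero, mul_zero]
  refine ⟨fun j => (∏ l ∈ (univ.erase i).erase j, (X i - X l) ^ (2 * c)) *
    pderiv i ((X i - X j) ^ (2 * c)) * C, ?_, fun j hj => ?_⟩
  · rw [selbergPairFactor, hsplit, pderiv_mul, hC, mul_zero, add_zero, (pderiv i).leibniz_prod,
      sum_mul]
  · have hlin : (X i - X j) * pderiv i ((X i - X j : MvPolynomial σ R) ^ (2 * c)) =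
        ((2 * c : ℕ) : MvPolynomial σ R) * (X i - X j) ^ (2 * c) := by
      rw [mul_pderiv_pow, map_sub, pderiv_X_self, pderiv_X_of_ne hj, sub_zero, mul_one]
    have hP :
        P = (∏ l ∈ (univ.erase i).erase j, (X i - X l) ^ (2 * c)) * (X i - X j) ^ (2 * c) :=
      (prod_erase_mul _ _ (mem_erase.2 ⟨hj, mem_univ j⟩)).symm
    rw [selbergPairFactor, hsplit, hP]
    linear_combination (∏ l ∈ (univ.erase i).erase j, (X i - X l) ^ (2 * c)) * C * hlin

theorem X_mul_one_sub_X_mul_pderiv_selbergWeight [DecidableEq σ] (i : σ) (a b : ℕ) :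
    X i * (1 - X i) * pderiv i (selbergWeight σ R a b) =
      ((a : MvPolynomial σ R) * (1 - X i) - (b : MvPolynomial σ R) * X i) *
        selbergWeight σ R a b := by
  have hfactor : X i * (1 - X i) * pderiv i ((X i : MvPolynomial σ R) ^ a * (1 - X i) ^ b) =
      ((a : MvPolynomial σ R) * (1 - X i) - (b : MvPolynomial σ R) * X i) *
        (X i ^ a * (1 - X i) ^ b) := by
    have ha := mul_pderiv_pow i (X i : MvPolynomial σ R) a
    have hb := mul_pderiv_pow i (1 - X i : MvPolynomial σ R) b
    rw [pderiv_X_self] at ha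
    rw [map_sub, pderiv_X_self, pderiv_one] at hb
    rw [pderiv_mul]
    linear_combination (1 - X i) * (1 - X i) ^ b * ha + X i * X i ^ a * hb
  rw [selbergWeight, (pderiv i).leibniz_prod, sum_eq_single i,
    ← mul_prod_erase univ _ (mem_univ i)]
  · linear_combination
      (∏ j ∈ univ.erase i, (X j : MvPolynomial σ R) ^ a * (1 - X j) ^ b) * hfactor
  · intro j _ hji
    rw [pderiv_mul, pderiv_pow, pderiv_pow, map_sub, pderiv_X_of_ne hji, pderiv_one]
    ring
  · simp

end SelbergFactors

section Symmetrization

variable {σ R : Type*} [Fintype σ] [CommRing R] {p : ℕ}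

theorem two_mul_fpIntegral_eq_add_rename (e : Equiv.Perm σ) (f : MvPolynomial σ R) :
    2 * fpIntegral p f = fpIntegral p (f + rename e f) := by
  rw [map_add, fpIntegral_rename_perm]
  ring

variable [IsDomain R] [DecidableEq σ] {i j : σ}
  (hij : i ≠ j) {f r G : MvPolynomial σ R}
  (hf : rename (Equiv.swap i j) f = f) (hr : (X i - X j) * r = f)
  (hG : rename (Equiv.swap i j) G = G)
include hij hf hr hG

theorem two_mul_fpIntegral_of_rename_swap_eq :
    2 * fpIntegral p (X i * (1 - X i) * G * r) = fpIntegral p ((1 - X i - X j) * G * f) := by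
  rw [two_mul_fpIntegral_eq_add_rename (Equiv.swap i j)]
  congr 1
  simp only [map_mul, map_sub, map_one, rename_X, Equiv.swap_apply_left, hG,
    rename_swap_eq_neg_of_X_sub_X_mul hij hf hr]
  linear_combination (1 - X i - X j) * G * hr

theorem two_mul_fpIntegral_X_mul_of_rename_swap_eq :
    2 * fpIntegral p (X i * (1 - X i) * (X j * G) * r) = -fpIntegral p (X i * X j * G * f) := by
  rw [two_mul_fpIntegral_eq_add_rename (Equiv.swap i j), ← map_neg]
  congr 1
  simp only [map_mul, map_sub, map_one, rename_X, Equiv.swap_apply_left, Equiv.swap_apply_right,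
    hG, rename_swap_eq_neg_of_X_sub_X_mul hij hf hr]
  linear_combination (-(X i * X j * G)) * hr

end Symmetrization

section AomotoRecursion

variable {σ R : Type*} [Fintype σ] [LinearOrder σ] [CommRing R] {p a b c : ℕ} {i : σ}
  {S : Finset σ}

local notation "Φ" => selbergPairFactor σ R c * selbergWeight σ R a b

theorem fpIntegral_pderiv_aomoto_eq_zero [CharP R p] [NeZero p] (hi : i ∉ S)
    {r : σ → MvPolynomial σ R}
    (hr : pderiv i (selbergPairFactor σ R c) = ∑ j ∈ univ.erase i, r j) :
    ((a + 1 : ℕ) : R) * fpIntegral p ((∏ l ∈ S, X l) * Φ) -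
      ((a + b + 2 : ℕ) : R) * fpIntegral p (X i * (∏ l ∈ S, X l) * Φ) +
      ∑ j ∈ univ.erase i, fpIntegral p
        (X i * (1 - X i) * ((∏ l ∈ S, X l) * selbergWeight σ R a b) * r j) = 0 := by
  set E : MvPolynomial σ R := ∏ l ∈ S, X l
  set A := selbergPairFactor σ R c
  set B := selbergWeight σ R a b
  have hE : pderiv i E = 0 :=
    (pderiv i).map_prod_eq_zero fun l hl => pderiv_X_of_ne (ne_of_mem_of_not_mem hl hi)
  have hB := X_mul_one_sub_X_mul_pderiv_selbergWeight (R := R) i a b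
  have hD : pderiv i (X i * (1 - X i) * E * (A * B)) =
      ((a + 1 : ℕ) : MvPolynomial σ R) * (E * (A * B)) -
        ((a + b + 2 : ℕ) : MvPolynomial σ R) * (X i * E * (A * B)) +
        ∑ j ∈ univ.erase i, X i * (1 - X i) * (E * B) * r j := by
    rw [← mul_sum, pderiv_mul, pderiv_mul, pderiv_mul, pderiv_mul, hE, hr, map_sub,
      pderiv_X_self, pderiv_one]
    push_cast
    linear_combination E * A * hB
  rw [← fpIntegral_pderiv (p := p) i (X i * (1 - X i) * E * (A * B)), hD, map_add, map_sub,
    map_sum, fpIntegral_natCast_mul, fpIntegral_natCast_mul]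

variable [IsDomain R] {j : σ} {r : MvPolynomial σ R} (hi : i ∉ S)
  (hr : (X i - X j) * r = ((2 * c : ℕ) : MvPolynomial σ R) * selbergPairFactor σ R c)
include hi hr

theorem two_mul_aomoto_term_of_mem (hj : j ∈ S) :
    2 * fpIntegral p (X i * (1 - X i) * ((∏ l ∈ S, X l) * selbergWeight σ R a b) * r) =
      -(2 * (c : R) * fpIntegral p (X i * (∏ l ∈ S, X l) * Φ)) := by
  have hij : i ≠ j := (ne_of_mem_of_not_mem hj hi).symm
  have hE : ∏ l ∈ S, X l = X j * ∏ l ∈ S.erase j, (X l : MvPolynomial σ R) :=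
    (mul_prod_erase S _ hj).symm
  have hE_swap : rename (Equiv.swap i j) (∏ l ∈ S.erase j, X l : MvPolynomial σ R) =
      ∏ l ∈ S.erase j, X l := rename_prod_X_of_forall_eq fun l hl =>
    Equiv.swap_apply_of_ne_of_ne (ne_of_mem_of_not_mem (mem_of_mem_erase hl) hi)
      (ne_of_mem_erase hl)
  have key := two_mul_fpIntegral_X_mul_of_rename_swap_eq (p := p) hij
    (by rw [map_mul, map_natCast, selbergPairFactor_isSymmetric]) hr
    (G := (∏ l ∈ S.erase j, X l) * selbergWeight σ R a b)
    (by rw [map_mul, hE_swap, selbergWeight_isSymmetric])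
  have hregroup : X i * X j * ((∏ l ∈ S.erase j, X l) * selbergWeight σ R a b) *
      (((2 * c : ℕ) : MvPolynomial σ R) * selbergPairFactor σ R c) =
      ((2 * c : ℕ) : MvPolynomial σ R) * (X i * (X j * ∏ l ∈ S.erase j, X l) * Φ) := by ring
  rw [hE, mul_assoc (X j), key, hregroup, fpIntegral_natCast_mul]
  push_cast
  ring

theorem two_mul_aomoto_term_of_not_mem (hj : j ∉ insert i S) :
    2 * fpIntegral p (X i * (1 - X i) * ((∏ l ∈ S, X l) * selbergWeight σ R a b) * r) =
      2 * (c : R) * (fpIntegral p ((∏ l ∈ S, X l) * Φ) -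
        2 * fpIntegral p (X i * (∏ l ∈ S, X l) * Φ)) := by
  obtain ⟨hji, hjS⟩ : j ≠ i ∧ j ∉ S := by simpa [not_or] using hj
  have hE_swap :
      rename (Equiv.swap i j) (∏ l ∈ S, X l : MvPolynomial σ R) = ∏ l ∈ S, X l :=
    rename_prod_X_of_forall_eq fun l hl =>
      Equiv.swap_apply_of_ne_of_ne (ne_of_mem_of_not_mem hl hi) (ne_of_mem_of_not_mem hl hjS)
  have hswap : fpIntegral p (X j * (∏ l ∈ S, X l) * Φ) =
      fpIntegral p (X i * (∏ l ∈ S, X l) * Φ) := by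
    rw [← fpIntegral_rename_perm (Equiv.swap i j)]
    simp only [map_mul, rename_X, Equiv.swap_apply_right, hE_swap,
      selbergPairFactor_isSymmetric c _, selbergWeight_isSymmetric a b _]
  rw [two_mul_fpIntegral_of_rename_swap_eq hji.symm
      (by rw [map_mul, map_natCast, selbergPairFactor_isSymmetric]) hr
      (by rw [map_mul, hE_swap, selbergWeight_isSymmetric]),
    show (1 - X i - X j) * ((∏ l ∈ S, X l) * selbergWeight σ R a b) *
        (((2 * c : ℕ) : MvPolynomial σ R) * selbergPairFactor σ R c) =
      ((2 * c : ℕ) : MvPolynomial σ R) * ((∏ l ∈ S, X l) * Φ) -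
        ((2 * c : ℕ) : MvPolynomial σ R) * (X i * (∏ l ∈ S, X l) * Φ) -
        ((2 * c : ℕ) : MvPolynomial σ R) * (X j * (∏ l ∈ S, X l) * Φ) by ring,
    map_sub, map_sub, fpIntegral_natCast_mul, fpIntegral_natCast_mul, fpIntegral_natCast_mul,
    hswap]
  push_cast
  ring

omit hr in
theorem aomoto_recursion [CharP R p] [NeZero p] (h2 : (2 : R) ≠ 0) :
    ((a + b + 2 + (#S + 2 * #(insert i S)ᶜ) * c : ℕ) : R) *
        fpIntegral p (X i * (∏ l ∈ S, X l) * Φ) =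
      ((a + 1 + #(insert i S)ᶜ * c : ℕ) : R) * fpIntegral p ((∏ l ∈ S, X l) * Φ) := by
  obtain ⟨r, hr, hrA⟩ := pderiv_selbergPairFactor (R := R) i c
  have hparts := fpIntegral_pderiv_aomoto_eq_zero (p := p) (a := a) (b := b) hi hr
  have hpartition : univ.erase i = S.disjUnion (insert i S)ᶜ
      (disjoint_left.2 fun l hl hlT => by simp [hl] at hlT) := by
    ext l
    by_cases hl : l ∈ S
    · simp [hl, ne_of_mem_of_not_mem hl hi]
    · simp [hl]
  have hsum : 2 * ∑ j ∈ univ.erase i,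
        fpIntegral p (X i * (1 - X i) * ((∏ l ∈ S, X l) * selbergWeight σ R a b) * r j) =
      #S * -(2 * (c : R) * fpIntegral p (X i * (∏ l ∈ S, X l) * Φ)) +
        #(insert i S)ᶜ * (2 * (c : R) * (fpIntegral p ((∏ l ∈ S, X l) * Φ) -
          2 * fpIntegral p (X i * (∏ l ∈ S, X l) * Φ))) := by
    rw [hpartition, sum_disjUnion, mul_add, mul_sum, mul_sum,
      sum_congr rfl fun j hj =>
        two_mul_aomoto_term_of_mem hi (hrA j (ne_of_mem_of_not_mem hj hi)) hj,
      sum_congr rfl fun j hj => two_mul_aomoto_term_of_not_mem hi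
        (hrA j fun h => mem_compl.1 hj (h ▸ mem_insert_self i S)) (mem_compl.1 hj),
      sum_const, sum_const, nsmul_eq_mul, nsmul_eq_mul]
  apply mul_left_cancel₀ h2
  push_cast at hparts ⊢
  linear_combination (-2) * hparts + hsum

end AomotoRecursion

theorem selbergPoly_eq (p n a b c : ℕ) :
    selbergPoly p n a b c =
      selbergPairFactor (Fin n) (ZMod p) c * selbergWeight (Fin n) (ZMod p) a b := by
  rw [selbergPoly, selbergPairFactor, prod_filter, ← univ_product_univ, prod_product]
  simp only [prod_filter]
  rfl

theorem selbergIntK_eq_fpIntegral (p n k a b c : ℕ) :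
    selbergIntK p n k a b c =
      fpIntegral p ((∏ l ∈ univ.filter (fun l : Fin n => (l : ℕ) < k), X l) *
        (selbergPairFactor (Fin n) (ZMod p) c * selbergWeight (Fin n) (ZMod p) a b)) := by
  rw [selbergIntK, selbergPoly_eq]
  rfl

theorem Fp_aomoto_recursion_general (p n k a b c : ℕ) [Fact p.Prime] (hodd : p ≠ 2)
    (hk1 : 1 ≤ k) (hkn : k ≤ n) :
    ((a + b + (2 * n - k - 1) * c + 2 : ℕ) : ZMod p) * selbergIntK p n k a b c =
      ((a + (n - k) * c + 1 : ℕ) : ZMod p) * selbergIntK p n (k - 1) a b c := by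
  set i : Fin n := ⟨k - 1, by omega⟩
  set S : Finset (Fin n) := {l | (l : ℕ) < k - 1}
  have hi : i ∉ S := by simp [S, i]
  have hS : #S = k - 1 := by simp [S, Fin.card_filter_val_lt]; omega
  have hT : #(insert i S)ᶜ = n - k := by
    rw [card_compl, card_insert_of_notMem hi, hS, Fintype.card_fin]
    omega
  have hblock : ∏ l ∈ univ.filter (fun l : Fin n => (l : ℕ) < k), X l =
      X i * ∏ l ∈ S, (X l : MvPolynomial (Fin n) (ZMod p)) := by
    rw [← prod_insert hi]
    congr 1
    ext l
    simp [S, i, Fin.ext_iff]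
    omega
  have h2 : (2 : ZMod p) ≠ 0 := Ring.two_ne_zero (by rwa [ZMod.ringChar_zmod_n])
  have key := aomoto_recursion (p := p) (a := a) (b := b) (c := c) hi h2
  rw [hS, hT] at key
  rw [selbergIntK_eq_fpIntegral, selbergIntK_eq_fpIntegral, hblock]
  convert key using 3
  · rw [show 2 * n - k - 1 = k - 1 + 2 * (n - k) by omega]
    ring
  · ring

/-- The Aomoto recursion over `F_p`. -/
theorem Fp_aomoto_recursion (p n k a b c : ℕ) [Fact p.Prime] (hodd : p ≠ 2)
    (hn : 1 ≤ n) (hk1 : 1 ≤ k) (hkn : k ≤ n)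
    (h : a + b + (2 * n - 2) * c < 2 * p - 2) :
    ((a + b + (2 * n - k - 1) * c + 2 : ℕ) : ZMod p) * selbergIntK p n k a b c =
      ((a + (n - k) * c + 1 : ℕ) : ZMod p) * selbergIntK p n (k - 1) a b c :=
  Fp_aomoto_recursion_general p n k a b c hodd hk1 hkn
end
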